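/- arXiv:2009.01899 — 2 statements merged into one kernel-verified Lean document; each statement's English description precedes it below -/
import Mathlib

section
/- Let C be a coherent group and let A be a finitely generated abelian group. Then the direct product C × A is coherent. -/
/-!
For a finitely generated `H ≤ C × A`, the projection to `C` has finitely generated, hence
finitely presented, image, and its kernel embeds in `A`, so it is finitely generated abelian,
hence finitely presented (finitely generated abelian groups are built by successive cyclic
extensions). Thus `H` is an extension of a finitely presented group by a finitely presented
group, and such an extension is finitely presented: take the generators of both, the relators of
the kernel, each relator of the quotient corrected by a word in the kernel's generators, and the
conjugates of the kernel's generators by the quotient's generators, rewritten in the same way.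
Modulo these relations the kernel's generators generate a normal subgroup which contains every
lift of a quotient relator, so a word that dies in the extension is equal to a word in the kernel's
generators, and that one is a consequence of the kernel's relators.
-/

namespace PaperBase

/-- A group is finitely presented. -/
def IsFinitelyPresentedGroup (G : Type*) [Group G] : Prop :=
  ∃ (n : ℕ) (rels : Set (FreeGroup (Fin n))), rels.Finite ∧
    Nonempty (PresentedGroup rels ≃* G)

/-- A group is coherent if every finitely generated subgroup is finitely presented. -/
def IsCoherentGroup (G : Type*) [Group G] : Prop :=
  ∀ H : Subgroup G, H.FG → IsFinitelyPresentedGroup H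

end PaperBase

open Subgroup Function

theorem Subgroup.mem_normalizer_closure_of_conj_mem {G : Type*} [Group G] {s : Set G}
    {g : G} (h : ∀ x ∈ s, g * x * g⁻¹ ∈ closure s) (h' : ∀ x ∈ s, g⁻¹ * x * g ∈ closure s) :
    g ∈ normalizer (closure s : Set G) := by
  rw [mem_normalizer_iff_map_conj_eq]
  refine le_antisymm ?_ ?_
  · rw [MonoidHom.map_closure, closure_le]
    rintro _ ⟨x, hx, rfl⟩
    exact h x hx
  · rw [closure_le]
    exact fun x hx => ⟨g⁻¹ * x * g, h' x hx, by simp [mul_assoc]⟩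

theorem Subgroup.normal_closure_sup_of_conj_mem {G : Type*} [Group G] {X U : Set G}
    {M : Subgroup G} [M.Normal] (hX : closure X = ⊤)
    (h : ∀ x ∈ X, ∀ u ∈ U, x * u * x⁻¹ ∈ closure U ⊔ M ∧ x⁻¹ * u * x ∈ closure U ⊔ M) :
    (closure U ⊔ M).Normal := by
  have hclosure : closure U ⊔ M = closure (U ∪ M) := by
    rw [Subgroup.closure_union, closure_eq]
  rw [← normalizer_eq_top_iff, eq_top_iff, ← hX, closure_le, hclosure]
  intro x hx
  refine mem_normalizer_closure_of_conj_mem ?_ ?_ <;> rw [← hclosure] <;>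
    rintro y (hy | hy)
  · exact (h x hx y hy).1
  · exact mem_sup_right (‹M.Normal›.conj_mem y hy x)
  · exact (h x hx y hy).2
  · simpa using mem_sup_right (‹M.Normal›.conj_mem y hy x⁻¹)

theorem Subgroup.le_of_le_sup_of_inf_le {G : Type*} [Group G] {K Y M : Subgroup G}
    [M.Normal] (hMK : M ≤ K) (hK : K ≤ Y ⊔ M) (hKY : K ⊓ Y ≤ M) : K ≤ M := by
  intro k hk
  obtain ⟨y, hy, m, hm, rfl⟩ := mem_sup_of_normal_right.mp (hK hk)
  have hyK : y ∈ K := by simpa using K.mul_mem hk (K.inv_mem (hMK hm))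
  exact M.mul_mem (hKY ⟨hyK, hy⟩) hm

theorem FreeGroup.ker_lift_sumElim_one (α β : Type*) :
    (lift (Sum.elim of 1) : FreeGroup (α ⊕ β) →* FreeGroup α).ker =
      normalClosure (Set.range (of ∘ Sum.inr)) := by
  set M := normalClosure (Set.range (of ∘ Sum.inr : β → FreeGroup (α ⊕ β)))
  refine le_antisymm (fun w hw => ?_) (normalClosure_le_normal ?_)
  · have hfactor : QuotientGroup.mk' M =
        ((QuotientGroup.mk' M).comp (map Sum.inl)).comp (lift (Sum.elim of 1)) := by
      ext (a | b)
      · simp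
      · exact (QuotientGroup.eq_one_iff _).mpr (subset_normalClosure (Set.mem_range_self b))
    rw [← QuotientGroup.ker_mk' M, MonoidHom.mem_ker, hfactor, MonoidHom.comp_apply,
      MonoidHom.mem_ker.mp hw, _root_.map_one]
  · rintro _ ⟨b, rfl⟩
    simp

theorem FreeGroup.lift_sumElim_one_surjective (α β : Type*) :
    Surjective (lift (Sum.elim of 1) : FreeGroup (α ⊕ β) →* FreeGroup α) := by
  rw [lift_surjective_iff_closure_range_eq_top, eq_top_iff, ← closure_range_of]
  exact closure_mono (Set.range_subset_iff.mpr fun a => ⟨Sum.inl a, rfl⟩)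

theorem MonoidHom.surjective_of_surjective_mk'_comp {F G : Type*} [Group F] [Group G]
    {N : Subgroup G} [N.Normal] (φ : F →* G) (hQ : Surjective ((QuotientGroup.mk' N).comp φ))
    (hN : N ≤ φ.range) : Surjective φ := by
  intro g
  obtain ⟨w, hw⟩ := hQ g
  obtain ⟨u, hu⟩ := hN (QuotientGroup.eq.mp hw)
  exact ⟨w * u, by simp [hu]⟩

theorem MonoidHom.ker_isFinitelyNormallyGenerated_of_extension {F F' G : Type*} [Group F]
    [Group F'] [Group G] {N : Subgroup G} [N.Normal] (φ : F →* G) (ι : F' →* F) {X U : Set F}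
    (hX : X.Finite) (hXF : closure X = ⊤) (hU : U.Finite) (hUι : closure U = ι.range)
    (hrange : (φ.comp ι).range = N) (hker : (φ.comp ι).ker.IsFinitelyNormallyGenerated)
    (hcomap : (N.comap φ).IsFinitelyNormallyGenerated) :
    φ.ker.IsFinitelyNormallyGenerated := by
  obtain ⟨S, hS, hSN⟩ := hcomap
  obtain ⟨T, hT, hTker⟩ := hker
  have hUN : ∀ u ∈ U, φ u ∈ N := by
    intro u hu
    obtain ⟨v, rfl⟩ : u ∈ ι.range := hUι ▸ subset_closure hu
    exact hrange ▸ ⟨v, rfl⟩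
  set D := S ∪
    (Set.image2 (fun x u => x * u * x⁻¹) X U ∪ Set.image2 (fun x u => x⁻¹ * u * x) X U)
  have hD : D.Finite := hS.union ((hX.image2 _ hU).union (hX.image2 _ hU))
  have hDN : ∀ d ∈ D, φ d ∈ N := by
    rintro d (hd | ⟨x, -, u, hu, rfl⟩ | ⟨x, -, u, hu, rfl⟩)
    · exact (hSN ▸ subset_normalClosure hd : d ∈ N.comap φ)
    · simpa using ‹N.Normal›.conj_mem _ (hUN u hu) (φ x)
    · simpa using ‹N.Normal›.conj_mem _ (hUN u hu) (φ x)⁻¹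
  have : ∀ d : D, ∃ v, φ (ι v) = φ d := fun d => by
    obtain ⟨v, hv⟩ : φ d ∈ (φ.comp ι).range := hrange ▸ hDN d d.2
    exact ⟨v, hv⟩
  choose v hv using this
  have := hD.to_subtype
  -- the relators of `N`, and every `d ∈ D` rewritten as a word `ι (v d)` in the image of `ι`
  set R := ι '' T ∪ Set.range (fun d : D => (d : F) * (ι (v d))⁻¹)
  set M := normalClosure R
  have hMker : M ≤ φ.ker := by
    refine normalClosure_le_normal ?_
    rintro _ (⟨t, ht, rfl⟩ | ⟨d, rfl⟩)
    · exact (hTker ▸ subset_normalClosure ht : t ∈ (φ.comp ι).ker)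
    · simp [hv]
  refine ⟨R, (hT.image _).union (Set.finite_range _), le_antisymm hMker ?_⟩
  have hDM : ∀ d ∈ D, d ∈ closure U ⊔ M := fun d hd => by
    have hrel : d * (ι (v ⟨d, hd⟩))⁻¹ ∈ closure U ⊔ M :=
      mem_sup_right (subset_normalClosure (Or.inr ⟨⟨d, hd⟩, rfl⟩))
    simpa using mul_mem hrel (mem_sup_left (hUι.ge ⟨v ⟨d, hd⟩, rfl⟩))
  have : (closure U ⊔ M).Normal := normal_closure_sup_of_conj_mem hXF fun x hx u hu =>
    ⟨hDM _ (Or.inr (Or.inl ⟨x, hx, u, hu, rfl⟩)), hDM _ (Or.inr (Or.inr ⟨x, hx, u, hu, rfl⟩))⟩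
  refine le_of_le_sup_of_inf_le (Y := closure U) hMker ?_ ?_
  · calc φ.ker ≤ N.comap φ := φ.ker_le_comap N
      _ = normalClosure S := hSN.symm
      _ ≤ closure U ⊔ M := normalClosure_le_normal fun s hs => hDM s (Or.inl hs)
  · rintro _ ⟨hz, hzι⟩
    obtain ⟨z, rfl⟩ := hUι.le hzι
    replace hz : z ∈ normalClosure T := hTker ▸ hz
    exact normalClosure_mono Set.subset_union_left (map_normalClosure_le T ι ⟨z, hz, rfl⟩)

open FreeGroup in
theorem Group.IsFinitelyPresented.of_normal_of_quotient {G : Type*} [Group G] (N : Subgroup G)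
    [N.Normal] [hN : IsFinitelyPresented N] [hQ : IsFinitelyPresented (G ⧸ N)] :
    IsFinitelyPresented G := by
  obtain ⟨n, fQ, hfQ, hkerQ⟩ := hQ.out
  obtain ⟨m, fN, hfN, hkerN⟩ := hN.out
  let φ : FreeGroup (Fin n ⊕ Fin m) →* G :=
    lift (Sum.elim (fun i => (fQ (of i)).out) (fun j => fN (of j)))
  let κ : FreeGroup (Fin n ⊕ Fin m) →* FreeGroup (Fin n) := lift (Sum.elim of 1)
  have hφN : φ.comp (map Sum.inr) = N.subtype.comp fN := by ext; simp [φ]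
  have hφQ : (QuotientGroup.mk' N).comp φ = fQ.comp κ := by ext (i | j) <;> simp [φ, κ]
  have hrange : (φ.comp (map Sum.inr)).range = N := by
    rw [hφN, MonoidHom.range_comp, MonoidHom.range_eq_top.mpr hfN, ← MonoidHom.range_eq_map,
      range_subtype]
  have hsurj : Surjective φ := by
    refine φ.surjective_of_surjective_mk'_comp (N := N) ?_ ?_
    · rw [hφQ, MonoidHom.coe_comp]
      exact hfQ.comp (lift_sumElim_one_surjective _ _)
    · rw [← hrange]
      rintro _ ⟨v, rfl⟩
      exact ⟨map Sum.inr v, rfl⟩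
  have hcomap : N.comap φ = fQ.ker.comap κ := by
    rw [MonoidHom.comap_ker, ← hφQ, ← MonoidHom.comap_ker, QuotientGroup.ker_mk']
  refine of_surjective φ hsurj (φ.ker_isFinitelyNormallyGenerated_of_extension (map Sum.inr)
    (Set.finite_range of) (closure_range_of _) ((Set.finite_range _).image of) range_map.symm
    hrange ?_ ?_)
  · rwa [hφN, MonoidHom.ker_comp_of_injective _ _ N.subtype_injective]
  · rw [hcomap]
    exact hkerQ.comap (lift_sumElim_one_surjective _ _)
      ⟨_, Set.finite_range _, (ker_lift_sumElim_one _ _).symm⟩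

theorem Group.fg_of_isCyclic (G : Type*) [Group G] [IsCyclic G] : Group.FG G := by
  obtain ⟨g, hg⟩ := isCyclic_iff_exists_zpowers_eq_top.mp ‹IsCyclic G›
  exact ⟨⟨{g}, by rw [Finset.coe_singleton, ← zpowers_eq_closure, hg]⟩⟩

theorem Group.IsFinitelyPresented.of_isCyclic (G : Type*) [Group G] [IsCyclic G] :
    IsFinitelyPresented G := by
  obtain ⟨g, hg⟩ := IsCyclic.exists_generator (α := G)
  have := Group.fg_of_isCyclic (zpowersHom G g).ker
  refine of_surjective (zpowersHom G g) (fun x => ?_) (.of_FG _)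
  obtain ⟨k, rfl⟩ := mem_zpowers_iff.mp (hg x)
  exact ⟨.ofAdd k, by simp⟩

theorem Group.IsFinitelyPresented.closure_finset_of_commGroup {A : Type*} [CommGroup A]
    (S : Finset A) : IsFinitelyPresented (closure (S : Set A)) := by
  classical
  induction S using Finset.induction_on with
  | empty =>
    rw [Finset.coe_empty, Subgroup.closure_empty]
    infer_instance
  | insert g S _ ih =>
    set K := closure (S : Set A)
    set L := closure ((insert g S : Finset A) : Set A)
    have hKL : K ≤ L := closure_mono (by simp)
    have := IsFinitelyPresented.equiv (subgroupOfEquivOfLe hKL).symm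
    have : IsCyclic (L ⧸ K.subgroupOf L) := by
      refine isCyclic_of_surjective
        (zpowersHom _ (QuotientGroup.mk (⟨g, subset_closure (by simp)⟩ : L))) ?_
      intro q
      induction q using QuotientGroup.induction_on with | H x => ?_
      obtain ⟨x, hx⟩ := x
      have hx' : x ∈ zpowers g ⊔ K := by
        rwa [zpowers_eq_closure, ← Subgroup.closure_union, ← Set.insert_eq, ← Finset.coe_insert]
      obtain ⟨_, ⟨k, rfl⟩, z, hz, rfl⟩ := mem_sup.mp hx'
      refine ⟨.ofAdd k, ?_⟩
      rw [zpowersHom_apply, toAdd_ofAdd, ← QuotientGroup.mk_zpow, QuotientGroup.eq,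
        mem_subgroupOf]
      simpa using hz
    have := of_isCyclic (L ⧸ K.subgroupOf L)
    exact of_normal_of_quotient (K.subgroupOf L)

theorem Subgroup.fg_of_commGroup_fg {A : Type*} [CommGroup A] [Group.FG A]
    (B : Subgroup A) : B.FG := by
  have : Module.Finite ℤ (Additive A) := Module.Finite.iff_addGroup_fg.mpr inferInstance
  have := IsNoetherian.noetherian (B.toAddSubgroup.toIntSubmodule)
  rw [Submodule.fg_iff_addSubgroup_fg] at this
  exact fg_iff_add_fg B |>.mpr this

namespace PaperBase

theorem isFinitelyPresentedGroup_iff (G : Type*) [Group G] :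
    IsFinitelyPresentedGroup G ↔ Group.IsFinitelyPresented G := by
  constructor
  · rintro ⟨n, rels, hrels, ⟨e⟩⟩
    have := hrels.to_subtype
    exact .equiv e
  · intro
    obtain ⟨n, rels, hrels, ⟨e⟩⟩ :=
      Group.IsFinitelyPresented.exists_mulEquiv_presentedGroup (G := G)
    exact ⟨n, rels, hrels, ⟨e.symm⟩⟩

theorem IsCoherentGroup.of_commGroup (A : Type*) [CommGroup A] : IsCoherentGroup A := by
  rintro _ ⟨S, rfl⟩
  exact (isFinitelyPresentedGroup_iff _).mpr (.closure_finset_of_commGroup S)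

/-- If `C` is a coherent group and `A` is a finitely generated abelian
group, then `C × A` is coherent. -/
theorem coherent_prod_fg_abelian (C A : Type*) [Group C] [CommGroup A]
    (hC : IsCoherentGroup C) (hA : Group.FG A) :
    IsCoherentGroup (C × A) := by
  intro H hH
  have := (Group.fg_iff_subgroup_fg H).mpr hH
  rw [isFinitelyPresentedGroup_iff]
  set p : H →* C := (MonoidHom.fst C A).comp H.subtype
  have : Group.IsFinitelyPresented (H ⧸ p.ker) := by
    have := (isFinitelyPresentedGroup_iff _).mp
      (hC p.range ((Group.fg_iff_subgroup_fg _).mp inferInstance))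
    exact .equiv (QuotientGroup.quotientKerEquivRange p).symm
  have : Group.IsFinitelyPresented p.ker := by
    set q : p.ker →* A := (MonoidHom.snd C A).comp (H.subtype.comp p.ker.subtype)
    have hq : Injective q := fun x y hxy =>
      Subtype.ext (Subtype.ext (Prod.ext (x.2.trans y.2.symm) hxy))
    have := (isFinitelyPresentedGroup_iff _).mp
      (IsCoherentGroup.of_commGroup A q.range q.range.fg_of_commGroup_fg)
    exact .equiv (MonoidHom.ofInjective hq).symm
  exact .of_normal_of_quotient p.ker

end PaperBase
end

section
/- Let G be a non-abelian group generated by a finite set X, satisfying: (C1) G is torsion-free; (C2) G has the big powers property; (C4)(a) disjoint commuting subsets Y, Y' of X generate their direct product ⟨Y⟩ × ⟨Y'⟩ and (b) x ∈ X with x ∈ ⟨Y⟩ for Y ⊆ X implies x ∈ Y; and the condition that for every g ∈ G, the centraliser C(g) is either conjugate to a canonical subgroup (one generated by a subset of X) or equal to ⟨g₀⟩ for an element g₀ which is not a proper power. If G is a CSA group, then G belongs to the class 𝒞. -/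
namespace PaperBase

/-- A subgroup is abelian: all its elements commute. -/
def IsAbelianSub {G : Type*} [Group G] (H : Subgroup G) : Prop :=
  ∀ a ∈ H, ∀ b ∈ H, a * b = b * a

/-- `L` is the internal direct product of its subgroups `H` and `K`. -/
def IsIDP {G : Type*} [Group G] (H K L : Subgroup G) : Prop :=
  (∀ h ∈ H, ∀ k ∈ K, Commute h k) ∧ H ⊓ K = ⊥ ∧ H ⊔ K = L

/-- `L` is the internal direct product of the family of subgroups `H i`. -/
def IsIDPFamily {G : Type*} [Group G] {ι : Type*} (H : ι → Subgroup G)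
    (L : Subgroup G) : Prop :=
  (∀ i j, i ≠ j → ∀ x ∈ H i, ∀ y ∈ H j, Commute x y) ∧
  (∀ i, H i ⊓ (⨆ (j) (_ : j ≠ i), H j) = ⊥) ∧
  (⨆ i, H i) = L

/-- The conjugate `h H h⁻¹` of a subgroup. -/
def conjSub {G : Type*} [Group G] (h : G) (H : Subgroup G) : Subgroup G :=
  H.map (MulAut.conj h).toMonoidHom

/-- Two subgroups are conjugate. -/
def AreConjSub {G : Type*} [Group G] (H K : Subgroup G) : Prop :=
  ∃ h : G, K = conjSub h H

/-- The big powers (BP) property: for every generic tuple `u` of non-trivial elements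
there is a bound `n` such that `u 0 ^ α 0 * ⋯ * u k ^ α k = 1` with all `α i > 0`
forces some `α i < n`. -/
def HasBigPowers (G : Type*) [Group G] : Prop :=
  ∀ (k : ℕ) (u : Fin (k + 1) → G), (∀ i, u i ≠ 1) →
    (∀ i : Fin k, ¬ Commute (u i.castSucc) (u i.succ)) →
    ∃ n : ℕ, ∀ α : Fin (k + 1) → ℕ, (∀ i, 0 < α i) →
      (List.ofFn fun i => u i ^ α i).prod = 1 → ∃ i, α i < n

/-- Unique roots. -/
def HasUniqueRoots (G : Type*) [Group G] : Prop :=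
  ∀ (g h : G) (n : ℕ), n ≠ 0 → g ^ n = h ^ n → g = h

/-- A root element: not a proper power. -/
def IsRootElement {G : Type*} [Group G] (g : G) : Prop :=
  ¬ ∃ (h : G) (n : ℕ), 2 ≤ n ∧ g = h ^ n

/-- A canonical subgroup with respect to the generating set `X`. -/
def IsCanonical {G : Type*} [Group G] (X : Set G) (H : Subgroup G) : Prop :=
  ∃ Y ⊆ X, H = Subgroup.closure Y

/-- `Y` is a minimal (by inclusion) subset of `X` satisfying `p`. -/
def MinimalWith {G : Type*} [Group G] (X : Set G) (p : Set G → Prop)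
    (Y : Set G) : Prop :=
  Y ⊆ X ∧ p Y ∧ ∀ Y' ⊆ Y, p Y' → Y' = Y

/-- The centre of a subgroup `H`, viewed as a subgroup of the ambient group. -/
def subCenter {G : Type*} [Group G] (H : Subgroup G) : Subgroup G :=
  H ⊓ Subgroup.centralizer (H : Set G)

/-- The generators `K` of a prospective subgroup `O(w)` commute with, and avoid, every
minimal subset `Y ⊆ X` satisfying `cond`. -/
def OProp {G : Type*} [Group G] (X : Set G) (cond : Set G → Prop) (K : Set G) : Prop :=
  ∀ Y : Set G, MinimalWith X cond Y → ∀ o ∈ K, (∀ y ∈ Y, Commute o y) ∧ o ∉ Y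

/-- `H` is the maximal canonical subgroup whose generators commute with, and avoid,
every minimal subset `Y ⊆ X` satisfying `cond`. -/
def MaxCanonicalWith {G : Type*} [Group G] (X : Set G) (cond : Set G → Prop)
    (H : Subgroup G) : Prop :=
  ∃ K ⊆ X, H = Subgroup.closure K ∧ OProp X cond K ∧
    ∀ K' ⊆ X, OProp X cond K' → Subgroup.closure K' ≤ H

/-- Torsion-free monoid (the removed Mathlib `Monoid.IsTorsionFree`, old meaning):
no nontrivial element has finite order. -/
def Monoid.IsTorsionFree (G : Type*) [Monoid G] : Prop :=
  ∀ g : G, g ≠ 1 → ¬IsOfFinOrder g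

/-- Conditions (C1)--(C8) for membership in the class 𝒞, with respect to the generating
set `X`, the set of representatives `W` and the centraliser decompositions `Z`, `O`. -/
structure ClassCWith (G : Type*) [Group G] (X W : Set G)
    (Z O : G → Subgroup G) : Prop where
  gen : Subgroup.closure X = ⊤
  /-- (C1) -/
  torsionFree : Monoid.IsTorsionFree G
  /-- (C2) -/
  bigPowers : HasBigPowers G
  /-- (C3) -/
  uniqueRoots : HasUniqueRoots G
  /-- (C4)(a) -/
  c4a : ∀ Y Y' : Set G, Y ⊆ X → Y' ⊆ X → Disjoint Y Y' →
    (∀ y ∈ Y, ∀ y' ∈ Y', Commute y y') →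
    IsIDP (Subgroup.closure Y) (Subgroup.closure Y') (Subgroup.closure (Y ∪ Y'))
  /-- (C4)(b) -/
  c4b : ∀ x ∈ X, ∀ Y ⊆ X, x ∈ Subgroup.closure Y → x ∈ Y
  /-- (C6)(a) -/
  c6a : ∀ g : G, ∃ (k : ℕ) (ws : Fin (k + 1) → G) (h : G),
    (∀ i, ws i ∈ W) ∧
    (∀ i, Subgroup.centralizer {g} = conjSub h (Subgroup.centralizer {ws i})) ∧
    (IsAbelianSub (Subgroup.centralizer {g}) → k = 0)
  /-- (C6)(b): `C(w) = Z(w) × O(w)` -/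
  c6b : ∀ w ∈ W, IsIDP (Z w) (O w) (Subgroup.centralizer {w})
  /-- (C6)(b)(i) -/
  c6bi : ∀ w ∈ W, IsAbelianSub (Subgroup.centralizer {w}) →
    IsCanonical X (Subgroup.centralizer {w}) →
    Z w = ⊥ ∧ O w = Subgroup.centralizer {w}
  /-- (C6)(b)(ii) -/
  c6bii : ∀ w ∈ W, IsAbelianSub (Subgroup.centralizer {w}) →
    ¬ IsCanonical X (Subgroup.centralizer {w}) →
    (∃ z : G, Z w = Subgroup.zpowers z) ∧ ¬ IsCanonical X (Z w) ∧
    MaxCanonicalWith X (fun Y => Z w ≤ Subgroup.closure Y) (O w)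
  /-- (C6)(b)(iii) -/
  c6biii : ∀ w ∈ W, ¬ IsAbelianSub (Subgroup.centralizer {w}) →
    MaxCanonicalWith X (fun Y => w ∈ Subgroup.closure Y) (O w)
  /-- (C6)(c) -/
  c6c : ∀ w ∈ W, ∀ g ∈ O w,
    ¬ AreConjSub (Subgroup.centralizer {w}) (Subgroup.centralizer ({g} : Set G)) →
    ∃ w₀ h : G, w₀ ∈ W ∧ w₀ ∈ O w ∧ h ∈ O w ∧
      Subgroup.centralizer ({g} : Set G) = conjSub h (Subgroup.centralizer {w₀})
  /-- (C7) -/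
  c7 : ∀ w ∈ W, IsAbelianSub (Subgroup.centralizer {w}) →
    ∀ a h : G, a ∈ Subgroup.centralizer ({w} : Set G) →
      h⁻¹ * a * h ∈ Subgroup.centralizer ({w} : Set G) →
      h ∉ Subgroup.centralizer ({w} : Set G) →
      a ∈ O w ∧ Commute h a
  /-- (C8) -/
  c8 : ∀ w ∈ W, ¬ IsAbelianSub (Subgroup.centralizer {w}) →
    IsCanonical X (Subgroup.centralizer {w}) ∧
    (∃ Yw : Set G, MinimalWith X (fun Y => w ∈ Subgroup.closure Y) Yw ∧
      Z w = Subgroup.closure Yw) ∧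
    IsCanonical X (subCenter (Subgroup.centralizer {w}))

/-- `G` belongs to the class `𝒞(X, W)`. -/
def MemClassC (G : Type*) [Group G] (X W : Set G) : Prop :=
  ∃ Z O : G → Subgroup G, ClassCWith G X W Z O

/-- `G` belongs to the class `𝒞`. -/
def InClassC (G : Type*) [Group G] : Prop :=
  ∃ X W : Set G, MemClassC G X W

/-- `H` is discriminated by (fully residually) `G`. -/
def DiscriminatedBy (H G : Type*) [Group H] [Group G] : Prop :=
  ∀ S : Finset H, (∀ x ∈ S, x ≠ 1) → ∃ f : H →* G, ∀ x ∈ S, f x ≠ 1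

/-- A finitely generated free abelian subgroup. -/
def IsFGFreeAbelianSub {G : Type*} [Group G] (H : Subgroup G) : Prop :=
  ∃ n : ℕ, Nonempty (H ≃* Multiplicative (Fin n → ℤ))



/-- A group is CSA if every maximal abelian subgroup `M` is malnormal:
`g⁻¹ M g ∩ M = 1` for all `g ∉ M`. -/
def IsCSA (G : Type*) [Group G] : Prop :=
  ∀ M : Subgroup G, IsAbelianSub M →
    (∀ N : Subgroup G, IsAbelianSub N → M ≤ N → M = N) →
    ∀ g : G, g ∉ M → conjSub g M ⊓ M = ⊥

/-!
In a CSA group every non-trivial element `a` has an abelian centraliser: `C(a)` lies in a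
maximal abelian subgroup `M ∋ a`, since `M` is malnormal and `C(a)` fixes `a`. Hence
commutation is transitive on non-trivial elements, roots are unique in the torsion-free case,
and an abelian centraliser meets none of its conjugates outside itself. So the only non-abelian
centraliser is `C(1) = G`, and every condition of `𝒞` reduces to a statement about `1` or about
a single abelian centraliser. Take for `W` the elements whose centraliser is canonical or
cyclic; put a canonical `C(w)` wholly into `O(w)` and a cyclic one wholly into `Z(w)`. For
cyclic non-canonical `C(w)` the maximal canonical `O(w)` is trivial: a non-trivial generator
commuting with a minimal `Y ⊆ X` with `C(w) ≤ ⟨Y⟩` commutes with `w`, hence by transitivity so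
does all of `Y`, which would make `C(w) = ⟨Y⟩` canonical.
-/

section CSA

open Subgroup

variable {G : Type*} [Group G]

lemma mem_conjSub {h x : G} {H : Subgroup G} : x ∈ conjSub h H ↔ h⁻¹ * x * h ∈ H := by
  constructor
  · rintro ⟨y, hy, rfl⟩
    simpa [MulAut.conj_apply, mul_assoc] using hy
  · exact fun hx => ⟨h⁻¹ * x * h, hx, by simp [MulAut.conj_apply, mul_assoc]⟩

lemma conjSub_one (H : Subgroup G) : conjSub 1 H = H := by
  ext x; simp [mem_conjSub]

lemma conjSub_conjSub (a b : G) (H : Subgroup G) :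
    conjSub a (conjSub b H) = conjSub (a * b) H := by
  ext x; simp [mem_conjSub, mul_assoc]

lemma conjSub_centralizer (h w : G) :
    conjSub h (centralizer {w}) = centralizer {h * w * h⁻¹} := by
  ext x
  simp only [mem_conjSub, mem_centralizer_singleton_iff]
  constructor
  · intro e
    simpa [mul_assoc] using congrArg (fun t => h * t * h⁻¹) e
  · intro e
    simpa [mul_assoc] using congrArg (fun t => h⁻¹ * t * h) e

lemma centralizer_one : centralizer ({1} : Set G) = ⊤ := by
  ext x; simp [mem_centralizer_singleton_iff]

lemma Monoid.IsTorsionFree.eq_one_of_pow_eq_one (hG : Monoid.IsTorsionFree G) {g : G} {n : ℕ}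
    (hn : n ≠ 0) (h : g ^ n = 1) : g = 1 := by
  by_contra hg
  exact hG g hg (isOfFinOrder_iff_pow_eq_one.2 ⟨n, Nat.pos_of_ne_zero hn, h⟩)

lemma exists_maximal_isAbelianSub_mem (a : G) :
    ∃ M : Subgroup G, IsAbelianSub M ∧ (∀ N, IsAbelianSub N → M ≤ N → M = N) ∧ a ∈ M := by
  have hchain : ∀ c ⊆ {H : Subgroup G | IsAbelianSub H}, IsChain (· ≤ ·) c → ∀ y ∈ c,
      ∃ ub ∈ {H : Subgroup G | IsAbelianSub H}, ∀ z ∈ c, z ≤ ub := by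
    intro c hc hchain y hy
    refine ⟨sSup c, fun x hx v hv => ?_, fun z hz => le_sSup hz⟩
    rw [mem_sSup_of_directedOn ⟨y, hy⟩ hchain.directedOn] at hx hv
    obtain ⟨P, hP, hxP⟩ := hx
    obtain ⟨Q, hQ, hvQ⟩ := hv
    rcases hchain.total hP hQ with hPQ | hQP
    · exact hc hQ x (hPQ hxP) v hvQ
    · exact hc hP x hxP v (hQP hvQ)
  have hzpowers : IsAbelianSub (zpowers a) := by
    rintro x ⟨m, rfl⟩ y ⟨n, rfl⟩
    exact Commute.zpow_zpow_self a m n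
  obtain ⟨M, hle, hM, hmax⟩ := zorn_le_nonempty₀ _ hchain (zpowers a) hzpowers
  exact ⟨M, hM, fun N hN hMN => le_antisymm hMN (hmax hN hMN), hle (mem_zpowers a)⟩

lemma IsCSA.isAbelianSub_centralizer (hCSA : IsCSA G) {a : G} (ha : a ≠ 1) :
    IsAbelianSub (centralizer {a}) := by
  obtain ⟨M, hab, hmax, haM⟩ := exists_maximal_isAbelianSub_mem a
  suffices hle : centralizer {a} ≤ M from fun x hx y hy => hab x (hle hx) y (hle hy)
  intro c hc
  by_contra hcM
  have hfix : c⁻¹ * a * c = a := by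
    rw [mul_assoc, (mem_centralizer_singleton_iff.1 hc).symm, inv_mul_cancel_left]
  have hmem : a ∈ conjSub c M ⊓ M := ⟨mem_conjSub.2 (by rwa [hfix]), haM⟩
  rw [hCSA M hab hmax c hcM] at hmem
  exact ha hmem

lemma IsCSA.eq_one_of_not_isAbelianSub (hCSA : IsCSA G) {w : G}
    (h : ¬ IsAbelianSub (centralizer {w})) : w = 1 :=
  not_imp_comm.1 hCSA.isAbelianSub_centralizer h

lemma IsCSA.commute_of_commute (hCSA : IsCSA G) {a b c : G} (ha : a ≠ 1)
    (hab : Commute a b) (hac : Commute a c) : Commute b c :=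
  hCSA.isAbelianSub_centralizer ha b (mem_centralizer_singleton_iff.2 hab.symm)
    c (mem_centralizer_singleton_iff.2 hac.symm)

lemma IsCSA.centralizer_eq_of_commute (hCSA : IsCSA G) {g w : G} (hg : g ≠ 1) (hw : w ≠ 1)
    (hgw : Commute g w) : centralizer ({g} : Set G) = centralizer {w} := by
  ext x
  simp only [mem_centralizer_singleton_iff]
  exact ⟨fun hx => (hCSA.commute_of_commute hg hgw hx.symm).symm,
    fun hx => (hCSA.commute_of_commute hw hgw.symm hx.symm).symm⟩

lemma IsCSA.hasUniqueRoots (hCSA : IsCSA G) (hG : Monoid.IsTorsionFree G) :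
    HasUniqueRoots G := by
  intro g h n hn hgh
  by_cases hg1 : g ^ n = 1
  · rw [hG.eq_one_of_pow_eq_one hn hg1, hG.eq_one_of_pow_eq_one (g := h) hn (hgh ▸ hg1)]
  have hcomm : Commute g h := hCSA.commute_of_commute hg1 ((Commute.refl g).pow_left n)
    (hgh ▸ (Commute.refl h).pow_left n)
  have hpow : (g * h⁻¹) ^ n = 1 := by
    rw [hcomm.inv_right.mul_pow, inv_pow, hgh, mul_inv_cancel]
  exact mul_inv_eq_one.1 (hG.eq_one_of_pow_eq_one hn hpow)

lemma IsCSA.eq_one_of_conj_mem_centralizer (hCSA : IsCSA G) {w a h : G}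
    (hab : IsAbelianSub (centralizer {w})) (ha : a ∈ centralizer {w})
    (hconj : h⁻¹ * a * h ∈ centralizer {w}) (hh : h ∉ centralizer {w}) : a = 1 := by
  have hmax : ∀ N, IsAbelianSub N → centralizer {w} ≤ N → centralizer {w} = N :=
    fun N hN hle => le_antisymm hle fun n hn =>
      mem_centralizer_singleton_iff.2 (hN w (hle (mem_centralizer_singleton_iff.2 rfl)) n hn).symm
  have hmem : a ∈ conjSub h (centralizer {w}) ⊓ centralizer {w} := ⟨mem_conjSub.2 hconj, ha⟩
  rwa [hCSA _ hab hmax h hh] at hmem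

lemma IsCSA.subCenter_top (hCSA : IsCSA G) (hna : ¬ ∀ a b : G, a * b = b * a) :
    subCenter (⊤ : Subgroup G) = ⊥ := by
  refine eq_bot_iff.2 fun z hz => ?_
  by_contra hz1
  have hcentral : ∀ x : G, x ∈ centralizer {z} := fun x =>
    mem_centralizer_singleton_iff.2 (mem_centralizer_iff.1 hz.2 x trivial)
  exact hna fun a b => hCSA.isAbelianSub_centralizer hz1 a (hcentral a) b (hcentral b)

end CSA

section Canonical

open Subgroup

variable {G : Type*} [Group G] {X : Set G}

lemma isCanonical_top (hgen : closure X = ⊤) : IsCanonical X ⊤ := ⟨X, subset_rfl, hgen.symm⟩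

lemma isCanonical_bot : IsCanonical X ⊥ := ⟨∅, Set.empty_subset X, closure_empty.symm⟩

lemma exists_minimalWith (hX : X.Finite) {p : Set G → Prop} (hp : p X) :
    ∃ Y, MinimalWith X p Y := by
  have hfin : {Y | Y ⊆ X ∧ p Y}.Finite := hX.finite_subsets.subset fun Y hY => hY.1
  obtain ⟨Y, ⟨hYX, hY⟩, hmin⟩ := hfin.exists_minimal ⟨X, subset_rfl, hp⟩
  exact ⟨Y, hYX, hY, fun Y' hY'Y hY' => le_antisymm hY'Y (hmin ⟨hY'Y.trans hYX, hY'⟩ hY'Y)⟩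

lemma minimalWith_empty {p : Set G → Prop} (hp : p ∅) : MinimalWith X p ∅ :=
  ⟨Set.empty_subset X, hp, fun _ hY _ => Set.subset_empty_iff.1 hY⟩

lemma maxCanonicalWith_top (hgen : closure X = ⊤) {p : Set G → Prop} (hp : p ∅) :
    MaxCanonicalWith X p ⊤ := by
  have hOProp : OProp X p X := by
    intro Y hY o _
    obtain rfl : ∅ = Y := hY.2.2 ∅ (Set.empty_subset Y) hp
    exact ⟨fun y hy => absurd hy (Set.notMem_empty y), Set.notMem_empty o⟩
  exact ⟨X, subset_rfl, hgen.symm, hOProp, fun _ _ _ => le_top⟩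

lemma IsCSA.maxCanonicalWith_bot (hCSA : IsCSA G) (hX : X.Finite) (hgen : closure X = ⊤)
    {w : G} (hw : ¬ IsCanonical X (centralizer {w})) :
    MaxCanonicalWith X (fun Y => centralizer {w} ≤ closure Y) ⊥ := by
  refine ⟨∅, Set.empty_subset X, closure_empty.symm,
    fun _ _ o ho => absurd ho (Set.notMem_empty o), fun K _ hK => (closure_le _).2 fun o ho => ?_⟩
  by_contra ho1
  obtain ⟨Y, hY⟩ := exists_minimalWith hX
    (p := fun Y => centralizer {w} ≤ closure Y) (by rw [hgen]; exact le_top)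
  have hoY : ∀ y ∈ Y, Commute o y := (hK Y hY o ho).1
  have hYo : closure Y ≤ centralizer {o} :=
    (closure_le _).2 fun y hy => mem_centralizer_singleton_iff.2 (hoY y hy).symm
  have how : Commute o w :=
    (mem_centralizer_singleton_iff.1 (hYo (hY.2.1 (mem_centralizer_singleton_iff.2 rfl)))).symm
  have hYw : closure Y ≤ centralizer {w} := (closure_le _).2 fun y hy =>
    mem_centralizer_singleton_iff.2 (hCSA.commute_of_commute ho1 (hoY y hy) how)
  exact hw ⟨Y, hY.1, le_antisymm hY.2.1 hYw⟩

end Canonical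

section Decomposition

open Subgroup

variable {G : Type*} [Group G] (X : Set G)

def centralizerReps : Set G :=
  {w | IsCanonical X (centralizer {w}) ∨ ∃ g₀ : G, centralizer {w} = zpowers g₀}

noncomputable def zFactor (w : G) : Subgroup G :=
  open Classical in if IsCanonical X (centralizer {w}) then ⊥ else centralizer {w}

noncomputable def oFactor (w : G) : Subgroup G :=
  open Classical in if IsCanonical X (centralizer {w}) then centralizer {w} else ⊥

variable {X}

lemma zFactor_of_isCanonical {w : G} (h : IsCanonical X (centralizer {w})) :
    zFactor X w = ⊥ := if_pos h

lemma oFactor_of_isCanonical {w : G} (h : IsCanonical X (centralizer {w})) :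
    oFactor X w = centralizer {w} := if_pos h

lemma zFactor_of_not_isCanonical {w : G} (h : ¬ IsCanonical X (centralizer {w})) :
    zFactor X w = centralizer {w} := if_neg h

lemma oFactor_of_not_isCanonical {w : G} (h : ¬ IsCanonical X (centralizer {w})) :
    oFactor X w = ⊥ := if_neg h

lemma isCanonical_centralizer_one (hgen : closure X = ⊤) :
    IsCanonical X (centralizer {(1 : G)}) :=
  centralizer_one (G := G) ▸ isCanonical_top hgen

lemma one_mem_centralizerReps (hgen : closure X = ⊤) : (1 : G) ∈ centralizerReps X :=
  Or.inl (isCanonical_centralizer_one hgen)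

lemma oFactor_le_centralizer (w : G) : oFactor X w ≤ centralizer {w} := by
  unfold oFactor; split_ifs <;> simp

lemma isIDP_zFactor_oFactor (w : G) :
    IsIDP (zFactor X w) (oFactor X w) (centralizer {w}) := by
  unfold zFactor oFactor
  split_ifs
  · exact ⟨fun h hh k _ => (mem_bot.1 hh).symm ▸ Commute.one_left k, by simp, by simp⟩
  · exact ⟨fun h _ k hk => (mem_bot.1 hk).symm ▸ Commute.one_right h, by simp, by simp⟩

lemma exists_centralizer_eq_conjSub_centralizerReps {g : G}
    (hg : (∃ (h : G) (H : Subgroup G), IsCanonical X H ∧ centralizer {g} = conjSub h H) ∨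
      ∃ g₀ : G, centralizer ({g} : Set G) = zpowers g₀) :
    ∃ w ∈ centralizerReps X, ∃ h : G, centralizer {g} = conjSub h (centralizer {w}) := by
  rcases hg with ⟨h, H, hH, hCg⟩ | ⟨g₀, hCg⟩
  · have hconj : centralizer {h⁻¹ * g * h} = H := by
      have e := conjSub_centralizer h⁻¹ g
      rw [inv_inv] at e
      rw [← e, hCg, conjSub_conjSub, inv_mul_cancel, conjSub_one]
    exact ⟨h⁻¹ * g * h, Or.inl (hconj ▸ hH), h, hconj ▸ hCg⟩
  · exact ⟨g, Or.inr ⟨g₀, hCg⟩, 1, (conjSub_one _).symm⟩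

lemma IsCSA.zFactor_oFactor_of_not_isCanonical (hCSA : IsCSA G) (hX : X.Finite)
    (hgen : closure X = ⊤) {w : G} (hw : w ∈ centralizerReps X)
    (hcan : ¬ IsCanonical X (centralizer {w})) :
    (∃ z : G, zFactor X w = zpowers z) ∧ ¬ IsCanonical X (zFactor X w) ∧
      MaxCanonicalWith X (fun Y => zFactor X w ≤ closure Y) (oFactor X w) := by
  rw [zFactor_of_not_isCanonical hcan, oFactor_of_not_isCanonical hcan]
  exact ⟨hw.resolve_left hcan, hcan, hCSA.maxCanonicalWith_bot hX hgen hcan⟩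

lemma IsCSA.exists_conj_of_mem_oFactor (hCSA : IsCSA G) (hgen : closure X = ⊤)
    (hcover : ∀ g : G, ∃ w ∈ centralizerReps X, ∃ h : G,
      centralizer {g} = conjSub h (centralizer {w}))
    {w g : G} (hg : g ∈ oFactor X w)
    (hnc : ¬ AreConjSub (centralizer {w}) (centralizer ({g} : Set G))) :
    ∃ w₀ h : G, w₀ ∈ centralizerReps X ∧ w₀ ∈ oFactor X w ∧ h ∈ oFactor X w ∧
      centralizer ({g} : Set G) = conjSub h (centralizer {w₀}) := by
  rcases eq_or_ne g 1 with rfl | hg1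
  · exact ⟨1, 1, one_mem_centralizerReps hgen, one_mem _, one_mem _, (conjSub_one _).symm⟩
  rcases eq_or_ne w 1 with rfl | hw1
  · obtain ⟨w₀, hw₀, h, hCg⟩ := hcover g
    rw [oFactor_of_isCanonical (isCanonical_centralizer_one hgen), centralizer_one]
    exact ⟨w₀, h, hw₀, trivial, trivial, hCg⟩
  · have hgw : Commute g w := mem_centralizer_singleton_iff.1 (oFactor_le_centralizer w hg)
    exact absurd ⟨1, by rw [conjSub_one, hCSA.centralizer_eq_of_commute hg1 hw1 hgw]⟩ hnc

end Decomposition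

/-- A non-abelian, finitely generated, torsion-free CSA group with the
big powers property, satisfying (C4) and whose centralisers of elements are either
conjugate to canonical subgroups or cyclic generated by a non-proper-power, belongs to
the class `𝒞`. -/
theorem csa_mem_classC (G : Type*) [Group G]
    (hna : ¬ ∀ a b : G, a * b = b * a)
    (X : Set G) (hfin : X.Finite) (hgen : Subgroup.closure X = ⊤)
    (hC1 : Monoid.IsTorsionFree G)
    (hC2 : HasBigPowers G)
    (hC4a : ∀ Y Y' : Set G, Y ⊆ X → Y' ⊆ X → Disjoint Y Y' →
      (∀ y ∈ Y, ∀ y' ∈ Y', Commute y y') →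
      IsIDP (Subgroup.closure Y) (Subgroup.closure Y')
        (Subgroup.closure (Y ∪ Y')))
    (hC4b : ∀ x ∈ X, ∀ Y ⊆ X, x ∈ Subgroup.closure Y → x ∈ Y)
    (hcent : ∀ g : G,
      (∃ (h : G) (H : Subgroup G), IsCanonical X H ∧
        Subgroup.centralizer {g} = conjSub h H) ∨
      (∃ g₀ : G, IsRootElement g₀ ∧
        Subgroup.centralizer ({g} : Set G) = Subgroup.zpowers g₀))
    (hCSA : IsCSA G) :
    InClassC G := by
  have hcover := fun g => exists_centralizer_eq_conjSub_centralizerReps (X := X)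
    ((hcent g).imp_right fun ⟨g₀, _, hg₀⟩ => ⟨g₀, hg₀⟩)
  have hcan1 := isCanonical_centralizer_one hgen
  refine ⟨X, centralizerReps X, zFactor X, oFactor X, hgen, hC1, hC2, hCSA.hasUniqueRoots hC1,
    hC4a, hC4b, fun g => ?_, fun w _ => isIDP_zFactor_oFactor w,
    fun w _ _ hcan => ⟨zFactor_of_isCanonical hcan, oFactor_of_isCanonical hcan⟩,
    fun w hw _ hcan => hCSA.zFactor_oFactor_of_not_isCanonical hfin hgen hw hcan, ?_,
    fun w _ g hg hnc => hCSA.exists_conj_of_mem_oFactor hgen hcover hg hnc, ?_, ?_⟩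
  · obtain ⟨w, hw, h, hCg⟩ := hcover g
    exact ⟨0, fun _ => w, h, fun _ => hw, fun _ => hCg, fun _ => rfl⟩
  · intro w _ hnab
    obtain rfl := hCSA.eq_one_of_not_isAbelianSub hnab
    rw [oFactor_of_isCanonical hcan1, centralizer_one]
    exact maxCanonicalWith_top hgen (Subgroup.one_mem _)
  · intro w _ hab a h ha hconj hh
    obtain rfl := hCSA.eq_one_of_conj_mem_centralizer hab ha hconj hh
    exact ⟨Subgroup.one_mem _, Commute.one_right h⟩
  · intro w _ hnab
    obtain rfl := hCSA.eq_one_of_not_isAbelianSub hnab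
    refine ⟨hcan1, ⟨∅, minimalWith_empty (Subgroup.one_mem _), ?_⟩, ?_⟩
    · rw [zFactor_of_isCanonical hcan1, Subgroup.closure_empty]
    · rw [centralizer_one, hCSA.subCenter_top hna]
      exact isCanonical_bot

end PaperBase
end
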